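/- arXiv:1807.02373 — 7 statements merged into one kernel-verified Lean document; each statement's English description precedes it below -/
import Mathlib

section
/- For all real numbers C₁, C₂, α, β > 0, there is no nondecreasing function N : ℕ → ℕ satisfying both of the following: (1) for every ε ∈ (0,1] there exists a natural number T_ε ≤ C₁·(1/ε)^α such that (1−ε)^{N(T)} < 1/3 for all integers T ≥ T_ε; and (2) there exists T₀ ∈ ℕ such that N(T) ≤ 2·C₂·(ln T)^β for all integers T ≥ T₀. -/
set_option maxHeartbeats 800000


/-- For all real numbers `C₁ C₂ α β > 0`, there is no nondecreasing
function `N : ℕ → ℕ` satisfying both: (1) for every `ε ∈ (0,1]` there exists a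
natural number `Tε ≤ C₁ * (1/ε)^α` such that `(1-ε)^(N T) < 1/3` for all `T ≥ Tε`;
and (2) there exists `T₀ ∈ ℕ` such that `N T ≤ 2*C₂*(ln T)^β` for all `T ≥ T₀`. -/
theorem no_efficient_and_logarithmic
    (C₁ C₂ α β : ℝ) (hC₁ : 0 < C₁) (hC₂ : 0 < C₂) (hα : 0 < α) (hβ : 0 < β) :
    ¬ ∃ N : ℕ → ℕ, Monotone N ∧
      (∀ ε : ℝ, 0 < ε → ε ≤ 1 → ∃ Tε : ℕ, (Tε : ℝ) ≤ C₁ * (1 / ε) ^ α ∧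
        ∀ T : ℕ, Tε ≤ T → (1 - ε) ^ (N T : ℝ) < 1 / 3) ∧
      (∃ T₀ : ℕ, ∀ T : ℕ, T₀ ≤ T → (N T : ℝ) ≤ 2 * C₂ * (Real.log T) ^ β) := by
  rintro ⟨N, hmono, h1, T₀, h2⟩
  have hlog2 : (0:ℝ) < Real.log 2 := Real.log_pos (by norm_num)
  set K : ℝ := Real.log (C₁ + T₀ + 2) / Real.log 2 + α with hKdef
  have hB2 : (2:ℝ) ≤ C₁ + (T₀:ℝ) + 2 := by
    have h0 : (0:ℝ) ≤ (T₀:ℝ) := Nat.cast_nonneg _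
    linarith
  have hK0 : 0 < K :=
    add_pos_of_nonneg_of_pos
      (div_nonneg (Real.log_nonneg (by linarith)) hlog2.le) hα
  have hKβ : 0 < K ^ β := Real.rpow_pos_of_pos hK0 β
  -- from littleO: eventually (log x)^β ≤ c * x
  have hc : (0:ℝ) < 1 / (8 * C₂ * K ^ β) := by positivity
  have hlo := (isLittleO_log_rpow_rpow_atTop β one_pos).def hc
  have hev : ∀ᶠ x : ℝ in Filter.atTop,
      Real.log x ^ β ≤ (1 / (8 * C₂ * K ^ β)) * x ∧ (2:ℝ) ≤ x := by
    filter_upwards [hlo, Filter.eventually_ge_atTop (2:ℝ)] with x hx h2x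
    refine ⟨?_, h2x⟩
    have hx0 : (0:ℝ) < x := by linarith
    have hlx : 0 ≤ Real.log x := Real.log_nonneg (by linarith)
    have : ‖Real.log x ^ β‖ ≤ (1 / (8 * C₂ * K ^ β)) * ‖x ^ (1:ℝ)‖ := hx
    rwa [Real.norm_eq_abs, Real.norm_eq_abs, abs_of_nonneg (Real.rpow_nonneg hlx β),
      Real.rpow_one, abs_of_pos hx0] at this
  obtain ⟨x, hxc, hx2⟩ := hev.exists
  have hx0 : (0:ℝ) < x := by linarith
  have hx1 : (1:ℝ) ≤ x := by linarith
  set ε : ℝ := 1 / x with hεdef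
  have hε0 : 0 < ε := by positivity
  have hε2 : ε ≤ 1/2 := by
    rw [hεdef]
    rw [div_le_div_iff₀ hx0 (by norm_num)]
    linarith
  have hε1 : ε ≤ 1 := by linarith
  obtain ⟨Tε, hTε, hT⟩ := h1 ε hε0 hε1
  have hinv : 1 / ε = x := by rw [hεdef, one_div_one_div]
  rw [hinv] at hTε
  set T : ℕ := Tε + T₀ + 2 with hTdef
  have hT1 : (1:ℝ) ≤ (T:ℝ) := by
    have : 2 ≤ T := by omega
    exact_mod_cast le_trans (by norm_num) (Nat.cast_le.mpr this)
  have hxα : (1:ℝ) ≤ x ^ α := Real.one_le_rpow hx1 hα.le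
  have hTreal : (T:ℝ) ≤ (C₁ + T₀ + 2) * x ^ α := by
    have : (T:ℝ) = (Tε:ℝ) + T₀ + 2 := by push_cast [hTdef]; ring
    rw [this]
    nlinarith [hTε, hxα]
  -- bound log T
  have hlogx2 : Real.log 2 ≤ Real.log x := Real.log_le_log (by norm_num) hx2
  have hlogT : Real.log T ≤ K * Real.log x := by
    have h1' : Real.log T ≤ Real.log ((C₁ + T₀ + 2) * x ^ α) :=
      Real.log_le_log (by linarith) hTreal
    rw [Real.log_mul (by linarith) (by positivity), Real.log_rpow hx0] at h1'
    have h2' : Real.log (C₁ + T₀ + 2) ≤ (Real.log (C₁ + T₀ + 2) / Real.log 2) * Real.log x := by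
      rw [div_mul_eq_mul_div, le_div_iff₀ hlog2]
      have := Real.log_nonneg (show (1:ℝ) ≤ C₁ + T₀ + 2 by linarith)
      nlinarith
    calc Real.log T ≤ Real.log (C₁ + T₀ + 2) + α * Real.log x := h1'
      _ ≤ (Real.log (C₁ + T₀ + 2) / Real.log 2) * Real.log x + α * Real.log x := by linarith
      _ = K * Real.log x := by rw [hKdef]; ring
  -- lower bound on N T
  have h1ε : 0 < 1 - ε := by linarith
  have hpow := hT T (by omega)
  have hlogpow : (N T : ℝ) * Real.log (1 - ε) < Real.log (1/3) :=
    (Real.log_rpow h1ε _) ▸ Real.log_lt_log (Real.rpow_pos_of_pos h1ε _) hpow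
  have hlog3 : Real.log (1/3) = - Real.log 3 := by
    rw [Real.log_div one_ne_zero (by norm_num), Real.log_one]; ring
  have hlb : Real.log (1 - ε) ≥ -(2*ε) := by
    have hle : Real.log (1/(1-ε)) ≤ 1/(1-ε) - 1 :=
      Real.log_le_sub_one_of_pos (by positivity)
    have heq : Real.log (1/(1-ε)) = - Real.log (1-ε) := by
      rw [Real.log_div one_ne_zero (ne_of_gt h1ε), Real.log_one]; ring
    have hfrac : 1/(1-ε) - 1 ≤ 2*ε := by
      rw [div_sub_one (ne_of_gt h1ε), div_le_iff₀ h1ε]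
      nlinarith
    linarith [heq ▸ hle]
  have hlog3gt : (1:ℝ) < Real.log 3 := by
    have : Real.exp 1 < 3 := by
      have := Real.exp_one_lt_d9; linarith
    calc (1:ℝ) = Real.log (Real.exp 1) := (Real.log_exp 1).symm
      _ < Real.log 3 := Real.log_lt_log (Real.exp_pos 1) this
  have hNpos : (0:ℝ) ≤ (N T : ℝ) := Nat.cast_nonneg _
  have hNlb : x / 2 < (N T : ℝ) := by
    have hm : (N T : ℝ) * (-(2*ε)) ≤ (N T : ℝ) * Real.log (1 - ε) :=
      mul_le_mul_of_nonneg_left hlb hNpos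
    rw [hlog3] at hlogpow
    have h3 : Real.log 3 < (N T : ℝ) * (2*ε) := by nlinarith [hm, hlogpow]
    have hεx : ε * x = 1 := by rw [hεdef]; field_simp
    nlinarith [h3, hεx, hε0, hlog3gt]
  -- upper bound on N T
  have hNub : (N T : ℝ) ≤ x / 4 := by
    have hub := h2 T (by omega)
    have hlogTnn : 0 ≤ Real.log T := Real.log_nonneg hT1
    have hr : Real.log T ^ β ≤ (K * Real.log x) ^ β :=
      Real.rpow_le_rpow hlogTnn hlogT hβ.le
    have hlxnn : 0 ≤ Real.log x := by linarith
    have hmul : (K * Real.log x) ^ β = K ^ β * Real.log x ^ β :=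
      Real.mul_rpow hK0.le hlxnn
    have : (N T : ℝ) ≤ 2 * C₂ * (K ^ β * Real.log x ^ β) := by
      calc (N T : ℝ) ≤ 2 * C₂ * Real.log T ^ β := hub
        _ ≤ 2 * C₂ * (K * Real.log x) ^ β := by nlinarith
        _ = 2 * C₂ * (K ^ β * Real.log x ^ β) := by rw [hmul]
    have hfin : 2 * C₂ * (K ^ β * Real.log x ^ β) ≤ x / 4 := by
      have := mul_le_mul_of_nonneg_left hxc (by positivity : (0:ℝ) ≤ 2 * C₂ * K ^ β)
      calc 2 * C₂ * (K ^ β * Real.log x ^ β)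
          = 2 * C₂ * K ^ β * Real.log x ^ β := by ring
        _ ≤ 2 * C₂ * K ^ β * ((1 / (8 * C₂ * K ^ β)) * x) := this
        _ = x / 4 := by field_simp; ring
    linarith
  linarith
end

section
/- Suppose every element occurring in the sequence x_1, …, x_T belongs to a subset Y ⊆ X with |Y| = m̄ (so m̄ ≤ n). Then the number of time steps at which the current element has been visited few times relative to the current time, namely Z_T := #{1 ≤ t ≤ T : max(1, N_{k_t}(x_t) − 1) ≤ √(t/n)}, satisfies Z_T ≤ 2·√(m̄·T) + 2·m̄. -/
/-!
Fix `y ∈ Y` and let `K` be the last episode containing a poorly visited time at which `y` occurs.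
All those times precede episode `K + 1`, so there are at most `N_K(y) + ν_K(y) ≤ 2 max(1, N_K(y))`
of them, while `N_K(y) ≤ √(T/n) + 1` because a time of episode `K` is poorly visited. Summing over
the `m̄` elements of `Y` and using `m̄ √(T/n) ≤ √(m̄ T)`, which holds as `m̄ ≤ n`, gives the bound.
-/

open Finset

section Visits

variable {X : Type*} [DecidableEq X]

def visits (x : ℕ → X) (a b : ℕ) (y : X) : ℕ := #{s ∈ Ico a b | x s = y}

theorem visits_le_visits_add_visits (x : ℕ → X) (y : X) (a b c : ℕ) :
    visits x a c y ≤ visits x a b y + visits x b c y :=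
  calc #{s ∈ Ico a c | x s = y} ≤ #{s ∈ Ico a b ∪ Ico b c | x s = y} :=
        card_le_card (filter_subset_filter _ Ico_subset_Ico_union_Ico)
    _ ≤ visits x a b y + visits x b c y := by rw [filter_union]; exact card_union_le _ _

theorem card_le_visits {x : ℕ → X} {y : X} {a b : ℕ} {S : Finset ℕ} (hS : S ⊆ Ico a b)
    (hx : ∀ s ∈ S, x s = y) : #S ≤ visits x a b y :=
  card_le_card fun s hs => mem_filter.2 ⟨hS hs, hx s hs⟩

end Visits

theorem lt_episode_start_succ {t : ℕ → ℕ} {T m j K s : ℕ} (htm1 : t (m + 1) = T + 1)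
    (hsT : s ≤ T) (hj : ∀ k, 1 ≤ k → k ≤ m → t k ≤ s → k ≤ j) (hjK : j ≤ K) (hKm : K ≤ m) :
    s < t (K + 1) := by
  rcases hKm.lt_or_eq with hK | rfl
  · by_contra! h
    have := hj (K + 1) (by omega) hK h
    omega
  · omega

theorem card_le_two_mul_of_visits_le {X : Type*} [DecidableEq X] {x : ℕ → X} {t kt : ℕ → ℕ}
    {T m : ℕ} {y : X} (htm1 : t (m + 1) = T + 1)
    (hkt : ∀ s, 1 ≤ s → s ≤ T →
      1 ≤ kt s ∧ kt s ≤ m ∧ ∀ k, 1 ≤ k → k ≤ m → t k ≤ s → k ≤ kt s)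
    (hstop : ∀ k, 1 ≤ k → k ≤ m → visits x (t k) (t (k + 1)) y ≤ max 1 (visits x 1 (t k) y))
    {S : Finset ℕ} (hS : ∀ s ∈ S, s ∈ Icc 1 T ∧ x s = y) {B : ℝ} (hB : 1 ≤ B)
    (hSB : ∀ s ∈ S, (visits x 1 (t (kt s)) y : ℝ) ≤ B) :
    (#S : ℝ) ≤ 2 * B := by
  obtain rfl | hne := S.eq_empty_or_nonempty
  · simp only [card_empty, Nat.cast_zero]
    linarith
  obtain ⟨s₀, hs₀, hmax⟩ := S.exists_max_image kt hne
  obtain ⟨hs₀1, hs₀T⟩ := mem_Icc.1 (hS s₀ hs₀).1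
  obtain ⟨hK1, hKm, -⟩ := hkt s₀ hs₀1 hs₀T
  have hsub : S ⊆ Ico 1 (t (kt s₀ + 1)) := fun s hs => by
    obtain ⟨hs1, hsT⟩ := mem_Icc.1 (hS s hs).1
    exact mem_Ico.2 ⟨hs1, lt_episode_start_succ htm1 hsT (hkt s hs1 hsT).2.2 (hmax s hs) hKm⟩
  have hcount : #S ≤ visits x 1 (t (kt s₀)) y + max 1 (visits x 1 (t (kt s₀)) y) :=
    (card_le_visits hsub fun s hs => (hS s hs).2).trans <|
      (visits_le_visits_add_visits x y _ _ _).trans (Nat.add_le_add_left (hstop _ hK1 hKm) _)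
  have hNK := hSB s₀ hs₀
  calc (#S : ℝ) ≤ visits x 1 (t (kt s₀)) y + max 1 (visits x 1 (t (kt s₀)) y : ℝ) := by
        exact_mod_cast hcount
    _ ≤ B + B := by gcongr; exact max_le hB hNK
    _ = 2 * B := by ring

theorem card_le_card_mul_of_card_fiber_le {α β : Type*} [DecidableEq β] {s : Finset α}
    {t : Finset β} {f : α → β} (hf : ∀ a ∈ s, f a ∈ t) {B : ℝ}
    (hB : ∀ b ∈ t, (#{a ∈ s | f a = b} : ℝ) ≤ B) : (#s : ℝ) ≤ #t * B := by
  by_contra! h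
  obtain ⟨b, hb, hlt⟩ := exists_lt_card_fiber_of_nsmul_lt_card_of_maps_to hf (b := B)
    (by rwa [nsmul_eq_mul])
  exact (hB b hb).not_gt hlt

theorem mul_sqrt_div_le_sqrt_mul {a b c : ℝ} (ha : 0 ≤ a) (hab : a ≤ b) (hc : 0 ≤ c) :
    a * √(c / b) ≤ √(a * c) := by
  have hsq : a * c * (a / b) = a * a * (c / b) := by ring
  calc a * √(c / b) = √(a * c * (a / b)) := by
        rw [hsq, Real.sqrt_mul (mul_self_nonneg a), Real.sqrt_mul_self ha]
    _ ≤ √(a * c) := Real.sqrt_le_sqrt <|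
        mul_le_of_le_one_right (by positivity) (div_le_one_of_le₀ hab (ha.trans hab))

theorem poorly_visited_bound_general
    {X : Type*} [Fintype X] [DecidableEq X]
    (n : ℕ) (hn : n = Fintype.card X)
    (T m : ℕ)
    (x : ℕ → X) (t : ℕ → ℕ)
    (htm1 : t (m + 1) = T + 1)
    (N ν : ℕ → X → ℕ)
    (hN : ∀ k y, N k y = ((Finset.Ico 1 (t k)).filter (fun s => x s = y)).card)
    (hν : ∀ k y, ν k y = ((Finset.Ico (t k) (t (k + 1))).filter (fun s => x s = y)).card)
    (hstop : ∀ k y, 1 ≤ k → k ≤ m → ν k y ≤ max 1 (N k y))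
    (kt : ℕ → ℕ)
    (hkt : ∀ s, 1 ≤ s → s ≤ T →
      1 ≤ kt s ∧ kt s ≤ m ∧ t (kt s) ≤ s ∧
        ∀ k, 1 ≤ k → k ≤ m → t k ≤ s → k ≤ kt s)
    (Y : Finset X) (mbar : ℕ) (hY : Y.card = mbar)
    (hxY : ∀ s, 1 ≤ s → s ≤ T → x s ∈ Y) :
    (((Finset.Icc 1 T).filter (fun s =>
        (max 1 (N (kt s) (x s) - 1) : ℝ) ≤ Real.sqrt ((s : ℝ) / n))).card : ℝ)
      ≤ 2 * Real.sqrt ((mbar : ℝ) * T) + 2 * mbar := by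
  set c := √((T : ℝ) / n)
  set A := (Finset.Icc 1 T).filter (fun s =>
    (max 1 (N (kt s) (x s) - 1) : ℝ) ≤ Real.sqrt ((s : ℝ) / n))
  have hN' : ∀ k y, N k y = visits x 1 (t k) y := hN
  have hν' : ∀ k y, ν k y = visits x (t k) (t (k + 1)) y := hν
  have hvisits : ∀ s ∈ A, (visits x 1 (t (kt s)) (x s) : ℝ) ≤ c + 1 := fun s hs => by
    obtain ⟨hsI, hslow⟩ := mem_filter.1 hs
    have hsc : √((s : ℝ) / n) ≤ c :=
      Real.sqrt_le_sqrt (by gcongr; exact_mod_cast (mem_Icc.1 hsI).2)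
    have hlow := (le_max_right _ _).trans hslow
    rw [hN'] at hlow
    linarith
  have hfiber : ∀ y ∈ Y, (#{s ∈ A | x s = y} : ℝ) ≤ 2 * (c + 1) := fun y _ =>
    card_le_two_mul_of_visits_le htm1
      (fun s hs1 hsT => let ⟨h1, h2, _, h4⟩ := hkt s hs1 hsT; ⟨h1, h2, h4⟩)
      (fun k hk1 hkm => by rw [← hN', ← hν']; exact hstop k y hk1 hkm)
      (fun s hs => ⟨(mem_filter.1 (mem_filter.1 hs).1).1, (mem_filter.1 hs).2⟩)
      (by linarith [Real.sqrt_nonneg ((T : ℝ) / n)])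
      (fun s hs => (mem_filter.1 hs).2 ▸ hvisits s (mem_filter.1 hs).1)
  have hmn : (mbar : ℝ) ≤ n := by rw [← hY, hn]; exact_mod_cast Y.card_le_univ
  have hA : ∀ s ∈ A, x s ∈ Y := fun s hs =>
    hxY s (mem_Icc.1 (mem_filter.1 hs).1).1 (mem_Icc.1 (mem_filter.1 hs).1).2
  calc (#A : ℝ) ≤ #Y * (2 * (c + 1)) := card_le_card_mul_of_card_fiber_le hA hfiber
    _ = 2 * (mbar * c) + 2 * mbar := by rw [hY]; ring
    _ ≤ 2 * √((mbar : ℝ) * T) + 2 * mbar := by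
        gcongr
        exact mul_sqrt_div_le_sqrt_mul (by positivity) hmn (by positivity)

/-- If every element occurring in the sequence `x 1, …, x T` belongs to
a subset `Y ⊆ X` with `|Y| = mbar`, then the number of time steps at which the current
element has been visited few times relative to the current time, namely
`Z_T := #{1 ≤ t ≤ T : max 1 (N_{k_t}(x_t) − 1) ≤ √(t/n)}`, satisfies
`Z_T ≤ 2·√(mbar·T) + 2·mbar`. -/
theorem poorly_visited_bound
    {X : Type*} [Fintype X] [DecidableEq X]
    (n : ℕ) (hn : n = Fintype.card X) (hn1 : 1 ≤ n)
    (T m : ℕ) (hT : 1 ≤ T) (hm : 1 ≤ m)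
    (x : ℕ → X) (t : ℕ → ℕ)
    (ht1 : t 1 = 1)
    (htmono : ∀ k, 1 ≤ k → k < m → t k < t (k + 1))
    (htm : t m ≤ T) (htm1 : t (m + 1) = T + 1)
    (N ν : ℕ → X → ℕ)
    (hN : ∀ k y, N k y = ((Finset.Ico 1 (t k)).filter (fun s => x s = y)).card)
    (hν : ∀ k y, ν k y = ((Finset.Ico (t k) (t (k + 1))).filter (fun s => x s = y)).card)
    (hstop : ∀ k y, 1 ≤ k → k ≤ m → ν k y ≤ max 1 (N k y))
    (kt : ℕ → ℕ)
    (hkt : ∀ s, 1 ≤ s → s ≤ T →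
      1 ≤ kt s ∧ kt s ≤ m ∧ t (kt s) ≤ s ∧
        ∀ k, 1 ≤ k → k ≤ m → t k ≤ s → k ≤ kt s)
    (Y : Finset X) (mbar : ℕ) (hY : Y.card = mbar)
    (hxY : ∀ s, 1 ≤ s → s ≤ T → x s ∈ Y) :
    (((Finset.Icc 1 T).filter (fun s =>
        (max 1 (N (kt s) (x s) - 1) : ℝ) ≤ Real.sqrt ((s : ℝ) / n))).card : ℝ)
      ≤ 2 * Real.sqrt ((mbar : ℝ) * T) + 2 * mbar :=
  poorly_visited_bound_general n hn T m x t htm1 N ν hN hν hstop kt hkt Y mbar hY hxY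
end

section
/- For every x ∈ X, the number of time steps at which x is visited while poorly explored satisfies #{1 ≤ t ≤ T : x_t = x and max(1, N_{k_t}(x) − 1) ≤ √(t/n)} ≤ 2·√(T/n) + 2. -/
/-- For every `y ∈ X`, the number of time steps at which `y` is visited
while poorly explored satisfies
`#{1 ≤ t ≤ T : x_t = y ∧ max 1 (N_{k_t}(y) − 1) ≤ √(t/n)} ≤ 2·√(T/n) + 2`. -/
theorem poorly_visited_bound_per_element
    {X : Type*} [Fintype X] [DecidableEq X]
    (n : ℕ) (hn : n = Fintype.card X) (hn1 : 1 ≤ n)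
    (T m : ℕ) (hT : 1 ≤ T) (hm : 1 ≤ m)
    (x : ℕ → X) (t : ℕ → ℕ)
    (ht1 : t 1 = 1)
    (htmono : ∀ k, 1 ≤ k → k < m → t k < t (k + 1))
    (htm : t m ≤ T) (htm1 : t (m + 1) = T + 1)
    (N ν : ℕ → X → ℕ)
    (hN : ∀ k y, N k y = ((Finset.Ico 1 (t k)).filter (fun s => x s = y)).card)
    (hν : ∀ k y, ν k y = ((Finset.Ico (t k) (t (k + 1))).filter (fun s => x s = y)).card)
    (hstop : ∀ k y, 1 ≤ k → k ≤ m → ν k y ≤ max 1 (N k y))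
    (kt : ℕ → ℕ)
    (hkt : ∀ s, 1 ≤ s → s ≤ T →
      1 ≤ kt s ∧ kt s ≤ m ∧ t (kt s) ≤ s ∧
        ∀ k, 1 ≤ k → k ≤ m → t k ≤ s → k ≤ kt s) :
    ∀ y : X,
      (((Finset.Icc 1 T).filter (fun s =>
          x s = y ∧ (max 1 (N (kt s) y - 1) : ℝ) ≤ Real.sqrt ((s : ℝ) / n))).card : ℝ)
        ≤ 2 * Real.sqrt ((T : ℝ) / n) + 2 := by
  intro y
  have hB0 : (0:ℝ) ≤ Real.sqrt ((T : ℝ) / n) := Real.sqrt_nonneg _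
  -- monotonicity of t on [1, m+1]
  have tstep : ∀ b, 1 ≤ b → b ≤ m → t b ≤ t (b + 1) := by
    intro b hb1 hbm
    rcases lt_or_eq_of_le hbm with h | h
    · exact (htmono b hb1 h).le
    · subst h; rw [htm1]; omega
  have tmono : ∀ a b, 1 ≤ a → a ≤ b → b ≤ m + 1 → t a ≤ t b := by
    intro a b ha hab hbm
    induction b with
    | zero => omega
    | succ c ih =>
      rcases Nat.lt_or_ge a (c+1) with h | h
      · have hc : a ≤ c := by omega
        have h1c : 1 ≤ c := by omega
        exact le_trans (ih hc (by omega)) (tstep c h1c (by omega))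
      · have : a = c + 1 := by omega
        subst this; exact le_rfl
  set S := (Finset.Icc 1 T).filter (fun s =>
      x s = y ∧ (max 1 (N (kt s) y - 1) : ℝ) ≤ Real.sqrt ((s : ℝ) / n)) with hSdef
  by_cases hSe : S.Nonempty
  · -- candidate episodes
    set C := (Finset.Icc 1 m).filter
        (fun k => ((N k y : ℝ) - 1) ≤ Real.sqrt ((T : ℝ) / n)) with hCdef
    have hmem : ∀ s ∈ S, kt s ∈ C := by
      intro s hs
      rw [hSdef, Finset.mem_filter, Finset.mem_Icc] at hs
      obtain ⟨⟨hs1, hsT⟩, hxy, hcond⟩ := hs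
      obtain ⟨hk1, hkm, -, -⟩ := hkt s hs1 hsT
      rw [hCdef, Finset.mem_filter, Finset.mem_Icc]
      refine ⟨⟨hk1, hkm⟩, ?_⟩
      have h1 : ((N (kt s) y : ℝ) - 1) ≤ max 1 ((N (kt s) y : ℝ) - 1) :=
        le_max_right _ _
      have h2 : Real.sqrt ((s : ℝ) / n) ≤ Real.sqrt ((T : ℝ) / n) := by
        have hc : (s : ℝ) ≤ (T : ℝ) := by exact_mod_cast hsT
        apply Real.sqrt_le_sqrt
        gcongr
      linarith
    have hCne : C.Nonempty := by
      obtain ⟨s, hs⟩ := hSe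
      exact ⟨kt s, hmem s hs⟩
    set K := C.max' hCne with hKdef
    have hKC : K ∈ C := C.max'_mem hCne
    have hK1 : 1 ≤ K := (Finset.mem_Icc.mp (Finset.mem_filter.mp hKC).1).1
    have hKm : K ≤ m := (Finset.mem_Icc.mp (Finset.mem_filter.mp hKC).1).2
    have hKB : ((N K y : ℝ) - 1) ≤ Real.sqrt ((T : ℝ) / n) :=
      (Finset.mem_filter.mp hKC).2
    -- S is contained in the visits to y before t (K+1)
    have hsub : S ⊆ (Finset.Ico 1 (t (K + 1))).filter (fun s => x s = y) := by
      intro s hs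
      have hsC := hmem s hs
      rw [hSdef, Finset.mem_filter, Finset.mem_Icc] at hs
      obtain ⟨⟨hs1, hsT⟩, hxy, -⟩ := hs
      obtain ⟨hk1, hkm, hts, hkmax⟩ := hkt s hs1 hsT
      have hlt : s < t (kt s + 1) := by
        by_contra h
        push_neg at h
        rcases lt_or_eq_of_le hkm with hlt' | heq
        · have := hkmax (kt s + 1) (by omega) (by omega) h
          omega
        · rw [heq, htm1] at h; omega
      have hle : t (kt s + 1) ≤ t (K + 1) := by
        have hksK : kt s ≤ K := C.le_max' _ hsC
        exact tmono (kt s + 1) (K + 1) (by omega) (by omega) (by omega)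
      rw [Finset.mem_filter, Finset.mem_Ico]
      exact ⟨⟨hs1, lt_of_lt_of_le hlt hle⟩, hxy⟩
    have hcard : S.card ≤ N (K + 1) y := by
      rw [hN]
      exact Finset.card_le_card hsub
    -- split N (K+1) = N K + ν K
    have h1tK : 1 ≤ t K := by
      have := tmono 1 K (le_refl 1) hK1 (by omega)
      omega
    have htKK : t K ≤ t (K + 1) := tstep K hK1 hKm
    have hsplit : N (K + 1) y = N K y + ν K y := by
      rw [hN, hN, hν]
      rw [← Finset.card_union_of_disjoint
        ((Finset.Ico_disjoint_Ico_consecutive 1 (t K) (t (K+1))).mono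
          (Finset.filter_subset _ _) (Finset.filter_subset _ _)),
        ← Finset.filter_union, Finset.Ico_union_Ico_eq_Ico h1tK htKK]
    have hν' : ν K y ≤ max 1 (N K y) := hstop K y hK1 hKm
    have hNK : ((N K y : ℕ) : ℝ) ≤ Real.sqrt ((T : ℝ) / n) + 1 := by
      linarith
    have hmax : ((max 1 (N K y) : ℕ) : ℝ) ≤ Real.sqrt ((T : ℝ) / n) + 1 := by
      rcases max_cases 1 (N K y) with ⟨h, -⟩ | ⟨h, -⟩ <;> rw [h]
      · linarith
      · exact hNK
    have hνK : ((ν K y : ℕ) : ℝ) ≤ Real.sqrt ((T : ℝ) / n) + 1 := by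
      have : ((ν K y : ℕ) : ℝ) ≤ ((max 1 (N K y) : ℕ) : ℝ) := by exact_mod_cast hν'
      linarith
    have : (S.card : ℝ) ≤ (N K y : ℝ) + (ν K y : ℝ) := by
      have h := hcard
      rw [hsplit] at h
      exact_mod_cast h
    linarith
  · rw [Finset.not_nonempty_iff_eq_empty] at hSe
    rw [hSe]
    simp only [Finset.card_empty, Nat.cast_zero]
    linarith
end

section
/- Let S be a finite set partitioned into two disjoint nonempty subsets C and T (C ∪ T = S, C ∩ T = ∅), let A be a nonempty finite set, and let D > 0 be a real number. Let p : C × A × S → ℝ be nonnegative with ∑_{s'∈S} p(s,a,s') = 1 for every (s,a) ∈ C × A, and suppose p(s,a,s') < 1/(D·|T|) for all s ∈ C, a ∈ A, s' ∈ T. Let τ : S → ℝ be nonnegative and suppose that for every s ∈ C, τ(s) ≥ 1 + min_{a∈A} ∑_{s'∈S} p(s,a,s')·τ(s'). Then min_{s∈C} τ(s) > D. -/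
/-- Let `S` be a finite set partitioned into two disjoint nonempty subsets
`C` and `Tset`, `A` a nonempty finite action set, `D > 0`. If `p` is a (sub)stochastic
kernel on `C × A` with `p(s,a,s') < 1/(D·|Tset|)` for all `s ∈ C`, `a ∈ A`, `s' ∈ Tset`,
and `τ ≥ 0` satisfies `τ(s) ≥ 1 + min_{a∈A} ∑_{s'} p(s,a,s')·τ(s')` for every `s ∈ C`,
then `min_{s∈C} τ(s) > D`. -/
theorem shortest_path_exceeds_diameter
    {S : Type*} [Fintype S] [DecidableEq S]
    {A : Type*} [Fintype A] [Nonempty A]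
    (C Tset : Finset S) (hCne : C.Nonempty) (hTne : Tset.Nonempty)
    (hdisj : Disjoint C Tset) (hunion : C ∪ Tset = Finset.univ)
    (D : ℝ) (hD : 0 < D)
    (p : S → A → S → ℝ)
    (hp0 : ∀ s ∈ C, ∀ a : A, ∀ s' : S, 0 ≤ p s a s')
    (hp1 : ∀ s ∈ C, ∀ a : A, ∑ s' : S, p s a s' = 1)
    (hsmall : ∀ s ∈ C, ∀ a : A, ∀ s' ∈ Tset, p s a s' < 1 / (D * Tset.card))
    (τ : S → ℝ) (hτ0 : ∀ s, 0 ≤ τ s)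
    (hτ : ∀ s ∈ C, τ s ≥
      1 + Finset.univ.inf' Finset.univ_nonempty (fun a : A => ∑ s' : S, p s a s' * τ s')) :
    D < C.inf' hCne τ := by
  set m := C.inf' hCne τ with hm
  obtain ⟨s₀, hs₀C, hs₀⟩ := Finset.exists_mem_eq_inf' hCne τ
  have hmle : ∀ s ∈ C, m ≤ τ s := fun s hs => Finset.inf'_le τ hs
  obtain ⟨a₀, _, ha₀⟩ := Finset.exists_mem_eq_inf' (Finset.univ_nonempty (α := A))
    (fun a : A => ∑ s' : S, p s₀ a s' * τ s')
  have hkey : m ≥ 1 + ∑ s' : S, p s₀ a₀ s' * τ s' := by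
    have := hτ s₀ hs₀C
    rw [← ha₀]
    rw [hm, hs₀]
    exact this
  set ε := ∑ s' ∈ Tset, p s₀ a₀ s' with hε
  have hcardpos : (0 : ℝ) < Tset.card := by
    exact_mod_cast Finset.card_pos.mpr hTne
  have hεlt : ε < 1 / D := by
    calc ε < ∑ s' ∈ Tset, 1 / (D * Tset.card) :=
          Finset.sum_lt_sum_of_nonempty hTne (fun s' hs' => hsmall s₀ hs₀C a₀ s' hs')
      _ = Tset.card * (1 / (D * Tset.card)) := by rw [Finset.sum_const, nsmul_eq_mul]
      _ = 1 / D := by field_simp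
  have hsplit : ∑ s' : S, p s₀ a₀ s' = (∑ s' ∈ C, p s₀ a₀ s') + ε := by
    rw [hε, ← Finset.sum_union hdisj, hunion]
  have hCsum : ∑ s' ∈ C, p s₀ a₀ s' = 1 - ε := by
    have := hp1 s₀ hs₀C a₀
    linarith [hsplit]
  have hτsplit : ∑ s' : S, p s₀ a₀ s' * τ s'
      = (∑ s' ∈ C, p s₀ a₀ s' * τ s') + ∑ s' ∈ Tset, p s₀ a₀ s' * τ s' := by
    rw [← Finset.sum_union hdisj, hunion]
  have hT0 : 0 ≤ ∑ s' ∈ Tset, p s₀ a₀ s' * τ s' :=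
    Finset.sum_nonneg fun s' _ => mul_nonneg (hp0 s₀ hs₀C a₀ s') (hτ0 s')
  have hClb : (1 - ε) * m ≤ ∑ s' ∈ C, p s₀ a₀ s' * τ s' := by
    rw [← hCsum, Finset.sum_mul]
    exact Finset.sum_le_sum fun s' hs' =>
      mul_le_mul_of_nonneg_left (hmle s' hs') (hp0 s₀ hs₀C a₀ s')
  have hεm : 1 ≤ ε * m := by nlinarith [hkey, hτsplit, hClb, hT0]
  have hεpos : 0 < ε := by
    by_contra h
    push_neg at h
    have hm0 : 0 ≤ m := le_trans (hτ0 s₀) (hs₀ ▸ le_refl _)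
    nlinarith
  have : D < 1 / ε := by
    rw [lt_div_iff₀ hεpos]
    calc D * ε < D * (1 / D) := by
          exact mul_lt_mul_of_pos_left hεlt hD
      _ = 1 := by field_simp
  calc D < 1 / ε := this
    _ ≤ m := (div_le_iff₀ hεpos).mpr (by linarith [hεm])
end

section
/- Let S and A be nonempty finite sets, r_max ≥ 0 a real number, r : S × A → ℝ with 0 ≤ r(s,a) ≤ r_max for all (s,a), and p : S × A × S → ℝ nonnegative with ∑_{s'∈S} p(s,a,s') = 1 for all (s,a). Define the optimal Bellman operator L on functions v : S → ℝ by (L v)(s) := max_{a∈A} ( r(s,a) + ∑_{s'∈S} p(s,a,s')·v(s') ), and let h_i := L^i 0 be the value-iteration iterates started from the zero function. Fix a target state s̄ ∈ S and let τ : S → ℝ be nonnegative with τ(s̄) = 0 and τ(s) ≥ 1 + min_{a∈A} ∑_{s'∈S} p(s,a,s')·τ(s') for every s ≠ s̄. Then for every i ≥ 0 and every s ∈ S, h_i(s̄) − h_i(s) ≤ r_max·τ(s). -/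
/-- For value iteration started from the zero vector in a finite MDP with
rewards in `[0, rmax]`, the difference of iterate values between a target state `sbar`
and any state `s` is at most `rmax` times any nonnegative super-solution `τ` of the
stochastic-shortest-path Bellman equation for hitting `sbar`. -/
theorem value_iteration_span_le_shortest_path
    {S : Type*} [Fintype S] [Nonempty S]
    {A : Type*} [Fintype A] [Nonempty A]
    (rmax : ℝ) (hrmax : 0 ≤ rmax)
    (r : S → A → ℝ) (hr : ∀ s a, 0 ≤ r s a ∧ r s a ≤ rmax)
    (p : S → A → S → ℝ) (hp0 : ∀ s a s', 0 ≤ p s a s')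
    (hp1 : ∀ s a, ∑ s' : S, p s a s' = 1)
    (L : (S → ℝ) → S → ℝ)
    (hL : ∀ v s, L v s =
      Finset.univ.sup' Finset.univ_nonempty (fun a : A => r s a + ∑ s' : S, p s a s' * v s'))
    (sbar : S) (τ : S → ℝ) (hτ0 : ∀ s, 0 ≤ τ s) (hτbar : τ sbar = 0)
    (hτ : ∀ s, s ≠ sbar → τ s ≥
      1 + Finset.univ.inf' Finset.univ_nonempty (fun a : A => ∑ s' : S, p s a s' * τ s')) :
    ∀ i : ℕ, ∀ s : S,
      (L^[i] (fun _ => 0)) sbar - (L^[i] (fun _ => 0)) s ≤ rmax * τ s := by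
  set h : ℕ → S → ℝ := fun i => L^[i] (fun _ => 0) with hh
  have hiter : ∀ i, h (i + 1) = L (h i) := fun i => Function.iterate_succ_apply' L i _
  -- monotonicity
  have hmono : ∀ v w : S → ℝ, (∀ s, v s ≤ w s) → ∀ s, L v s ≤ L w s := by
    intro v w hvw s
    rw [hL, hL]
    apply Finset.sup'_le
    intro a _
    refine le_trans ?_ (Finset.le_sup' _ (Finset.mem_univ a))
    gcongr with s' _
    · exact hp0 s a s'
    · exact hvw s'
  -- shift by constant
  have hshift : ∀ (v : S → ℝ) (c : ℝ) (s : S), L (fun x => v x + c) s = L v s + c := by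
    intro v c s
    rw [hL, hL]
    have key : ∀ a : A, r s a + ∑ s' : S, p s a s' * (v s' + c)
        = (r s a + ∑ s' : S, p s a s' * v s') + c := by
      intro a
      have : ∑ s' : S, p s a s' * (v s' + c)
          = (∑ s' : S, p s a s' * v s') + (∑ s' : S, p s a s') * c := by
        rw [Finset.sum_mul]
        rw [← Finset.sum_add_distrib]
        congr 1; ext s'; ring
      rw [this, hp1 s a]; ring
    simp only [key]
    apply le_antisymm
    · apply Finset.sup'_le
      intro a _
      have := Finset.le_sup' (f := fun a : A => r s a + ∑ s' : S, p s a s' * v s')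
        (b := a) (Finset.mem_univ a)
      linarith [this]
    · have : ∀ b : A, (r s b + ∑ s' : S, p s b s' * v s')
          ≤ Finset.univ.sup' Finset.univ_nonempty
            (fun a : A => (r s a + ∑ s' : S, p s a s' * v s') + c) - c := by
        intro b
        have := Finset.le_sup' (f := fun a : A => (r s a + ∑ s' : S, p s a s' * v s') + c)
          (b := b) (Finset.mem_univ b)
        linarith
      have h2 := Finset.sup'_le Finset.univ_nonempty
        (fun a : A => r s a + ∑ s' : S, p s a s' * v s') (fun b _ => this b)
      linarith
  -- one-step growth bound
  have hstep : ∀ i s, h (i + 1) s ≤ h i s + rmax := by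
    intro i
    induction i with
    | zero =>
      intro s
      have : h 1 s = L (fun _ => 0) s := by rw [hiter 0]; rfl
      rw [this, hL]
      have h0 : h 0 s = 0 := rfl
      rw [h0]
      apply Finset.sup'_le
      intro a _
      simp only [mul_zero, Finset.sum_const_zero, add_zero, zero_add]
      exact (hr s a).2
    | succ n ih =>
      intro s
      rw [hiter (n + 1)]
      calc L (h (n + 1)) s ≤ L (fun x => h n x + rmax) s := hmono _ _ ih s
        _ = L (h n) s + rmax := hshift _ _ s
        _ = h (n + 1) s + rmax := by rw [hiter n]
  -- main induction
  intro i
  induction i with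
  | zero => intro s; simpa using mul_nonneg hrmax (hτ0 s)
  | succ n ih =>
    intro s
    by_cases hs : s = sbar
    · subst hs
      simp [hτbar]
    · obtain ⟨a, -, ha⟩ := Finset.exists_mem_eq_inf' (s := (Finset.univ : Finset A))
        Finset.univ_nonempty (fun a : A => ∑ s' : S, p s a s' * τ s')
      have hlow : ∑ s' : S, p s a s' * h n s' ≤ h (n + 1) s := by
        rw [hiter n, hL]
        refine le_trans ?_ (Finset.le_sup' _ (Finset.mem_univ a))
        have := (hr s a).1
        linarith
      have hup : h (n + 1) sbar ≤ h n sbar + rmax := hstep n sbar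
      have hsum : h (n + 1) sbar - ∑ s' : S, p s a s' * h n s'
          = ∑ s' : S, p s a s' * (h (n + 1) sbar - h n s') := by
        have : ∑ s' : S, p s a s' * (h (n + 1) sbar - h n s')
            = (∑ s' : S, p s a s') * h (n + 1) sbar - ∑ s' : S, p s a s' * h n s' := by
          rw [Finset.sum_mul, ← Finset.sum_sub_distrib]
          congr 1; ext s'; ring
        rw [this, hp1 s a]; ring
      have hbound : ∑ s' : S, p s a s' * (h (n + 1) sbar - h n s')
          ≤ ∑ s' : S, p s a s' * (rmax + rmax * τ s') := by
        apply Finset.sum_le_sum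
        intro s' _
        apply mul_le_mul_of_nonneg_left _ (hp0 s a s')
        have := ih s'
        linarith
      have hcalc : ∑ s' : S, p s a s' * (rmax + rmax * τ s')
          = rmax * (1 + ∑ s' : S, p s a s' * τ s') := by
        have : ∑ s' : S, p s a s' * (rmax + rmax * τ s')
            = (∑ s' : S, p s a s') * rmax + rmax * ∑ s' : S, p s a s' * τ s' := by
          rw [Finset.sum_mul, Finset.mul_sum, ← Finset.sum_add_distrib]
          congr 1; ext s'; ring
        rw [this, hp1 s a]; ring
      have hτs : 1 + ∑ s' : S, p s a s' * τ s' ≤ τ s := by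
        have := hτ s hs
        rw [ha] at this
        linarith
      calc h (n + 1) sbar - h (n + 1) s
          ≤ h (n + 1) sbar - ∑ s' : S, p s a s' * h n s' := by linarith
        _ = ∑ s' : S, p s a s' * (h (n + 1) sbar - h n s') := hsum
        _ ≤ ∑ s' : S, p s a s' * (rmax + rmax * τ s') := hbound
        _ = rmax * (1 + ∑ s' : S, p s a s' * τ s') := hcalc
        _ ≤ rmax * τ s := by
            apply mul_le_mul_of_nonneg_left hτs hrmax
end

section
/- Let a ≤ b be integers, c ≥ 0 a real number, u : {a, …, b} → ℝ a function with 0 ≤ u_t ≤ c for all t ∈ {a, …, b}, and i : {a, …, b−1} → {0,1}. Then ∑_{t=a}^{b−1} (u_{t+1} − u_t)·i_t ≤ c + c·#{a ≤ t ≤ b−1 : i_t = 0}. -/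
/-!
Since `i_t ∈ {0, 1}`, each term `(u_{t+1} - u_t) i_t` is at most `(u_{t+1} - u_t) + c [i_t = 0]`:
when `i_t = 0` this says `u_t - u_{t+1} ≤ c`, which holds as `u` takes values in `[0, c]`.
Summing, the increments telescope to `u_b - u_a ≤ c`.
-/

open Finset

theorem Int.sum_Ico_sub_eq {M : Type*} [AddCommGroup M] (f : ℤ → M) {m n : ℤ} (hmn : m ≤ n) :
    ∑ t ∈ Ico m n, (f (t + 1) - f t) = f n - f m := by
  induction n, hmn using Int.leInduction with
  | base => simp
  | succ n hmn ih =>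
    rw [← sum_Ico_add_eq_sum_Ico_add_one hmn, ih]
    abel

section Indicator

variable {ι R : Type*} [Ring R] [LinearOrder R] [IsStrictOrderedRing R]

theorem mul_le_add_ite_of_eq_zero_or_eq_one {x y c : R} (hx : -c ≤ x) (hy : y = 0 ∨ y = 1) :
    x * y ≤ x + if y = 0 then c else 0 := by
  rcases hy with rfl | rfl
  · simpa only [mul_zero, if_true] using neg_le_iff_add_nonneg.mp hx
  · simp

theorem sum_mul_le_sum_add_mul_card_filter_eq_zero (s : Finset ι) (x y : ι → R) {c : R}
    (hx : ∀ t ∈ s, -c ≤ x t) (hy : ∀ t ∈ s, y t = 0 ∨ y t = 1) :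
    ∑ t ∈ s, x t * y t ≤ ∑ t ∈ s, x t + c * #(s.filter (fun t => y t = 0)) := by
  calc ∑ t ∈ s, x t * y t ≤ ∑ t ∈ s, (x t + if y t = 0 then c else 0) :=
        sum_le_sum fun t ht => mul_le_add_ite_of_eq_zero_or_eq_one (hx t ht) (hy t ht)
    _ = ∑ t ∈ s, x t + c * #(s.filter (fun t => y t = 0)) := by
        rw [sum_add_distrib, ← sum_filter, sum_const, nsmul_eq_mul']

end Indicator

theorem truncated_telescoping_general
    (a b : ℤ) (hab : a ≤ b) (c : ℝ)
    (u : ℤ → ℝ) (hu : ∀ t ∈ Finset.Icc a b, 0 ≤ u t ∧ u t ≤ c)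
    (i : ℤ → ℝ) (hi : ∀ t ∈ Finset.Icc a (b - 1), i t = 0 ∨ i t = 1) :
    ∑ t ∈ Finset.Icc a (b - 1), (u (t + 1) - u t) * i t
      ≤ c + c * ((Finset.Icc a (b - 1)).filter (fun t => i t = 0)).card := by
  rw [Icc_sub_one_right_eq_Ico] at hi ⊢
  have increment_ge : ∀ t ∈ Ico a b, -c ≤ u (t + 1) - u t := fun t ht => by
    have hut := hu t (Ico_subset_Icc_self ht)
    have hut' := hu (t + 1) (by rw [mem_Ico] at ht; rw [mem_Icc]; omega)
    linarith
  have hua := hu a (left_mem_Icc.mpr hab)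
  have hub := hu b (right_mem_Icc.mpr hab)
  calc ∑ t ∈ Ico a b, (u (t + 1) - u t) * i t
      ≤ ∑ t ∈ Ico a b, (u (t + 1) - u t) + c * #((Ico a b).filter (fun t => i t = 0)) :=
        sum_mul_le_sum_add_mul_card_filter_eq_zero _ _ _ increment_ge hi
    _ = u b - u a + c * #((Ico a b).filter (fun t => i t = 0)) := by
        rw [Int.sum_Ico_sub_eq u hab]
    _ ≤ c + c * #((Ico a b).filter (fun t => i t = 0)) := by linarith

/-- Truncated telescoping bound: if `0 ≤ u t ≤ c` on `{a, …, b}` and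
`i` is a `{0,1}`-valued indicator on `{a, …, b−1}`, then
`∑_{t=a}^{b−1} (u_{t+1} − u_t)·i_t ≤ c + c·#{a ≤ t ≤ b−1 : i_t = 0}`. -/
theorem truncated_telescoping
    (a b : ℤ) (hab : a ≤ b) (c : ℝ) (hc : 0 ≤ c)
    (u : ℤ → ℝ) (hu : ∀ t ∈ Finset.Icc a b, 0 ≤ u t ∧ u t ≤ c)
    (i : ℤ → ℝ) (hi : ∀ t ∈ Finset.Icc a (b - 1), i t = 0 ∨ i t = 1) :
    ∑ t ∈ Finset.Icc a (b - 1), (u (t + 1) - u t) * i t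
      ≤ c + c * ((Finset.Icc a (b - 1)).filter (fun t => i t = 0)).card :=
  truncated_telescoping_general a b hab c u hu i hi
end

section
/- Suppose in addition that T ≥ n and that there is a set E of at most K 'special' episodes such that every non-final episode not in E ends because the count of some element reached its past count, i.e., for every k ∈ {1, …, m−1} with k ∉ E there exists x ∈ X such that ν_k(x) = max(1, N_k(x)). Then the number of episodes satisfies m ≤ 1 + 2n + n·log₂(T/n) + K. -/
/-!
Every non-final episode outside `E` has a trigger `y` with `ν_k(y) = max(1, N_k(y))`, so during
that episode the count of `y` at least doubles (from `0` it becomes at least `1`). If `y` triggers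
`r_y` episodes, then `2 ^ r_y ≤ 2 max(1, c_y)` where `c_y` is the final count of `y`, i.e.
`r_y ≤ 1 + log₂ max(1, c_y)`. Summing over `y`, concavity of `log₂` and
`∑_y max(1, c_y) ≤ n + T ≤ 2T` bound the number of triggered episodes by `2n + n log₂(T/n)`;
the remaining episodes are the last one and those in `E`.
-/

open Finset Real

theorem card_filter_Ico_add_card_filter_Ico (p : ℕ → Prop) [DecidablePred p] {a b c : ℕ}
    (hab : a ≤ b) (hbc : b ≤ c) :
    #{s ∈ Ico a b | p s} + #{s ∈ Ico b c | p s} = #{s ∈ Ico a c | p s} := by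
  rw [← card_union_of_disjoint (disjoint_filter_filter (Ico_disjoint_Ico_consecutive a b c)),
    ← filter_union, Ico_union_Ico_eq_Ico hab hbc]

theorem count_succ_eq_add {X : Type*} [DecidableEq X] {x : ℕ → X} {t : ℕ → ℕ} {m : ℕ}
    {N ν : ℕ → X → ℕ} (ht : MonotoneOn t (Set.Icc 1 (m + 1))) (ht1 : t 1 = 1)
    (hN : ∀ k y, N k y = #{s ∈ Ico 1 (t k) | x s = y})
    (hν : ∀ k y, ν k y = #{s ∈ Ico (t k) (t (k + 1)) | x s = y})
    {k : ℕ} (hk : 1 ≤ k) (hkm : k ≤ m) (y : X) :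
    N (k + 1) y = N k y + ν k y := by
  have h1 : 1 ≤ t k := ht1 ▸ ht ⟨le_rfl, by omega⟩ ⟨hk, by omega⟩ hk
  have h2 : t k ≤ t (k + 1) := ht ⟨hk, by omega⟩ ⟨by omega, by omega⟩ (by omega)
  rw [hN, hN, hν, card_filter_Ico_add_card_filter_Ico _ h1 h2]

-- The first doubling only takes `g` from `0` to `1`, hence `g b + max 1 (g b)` and not `2 * g b`.
theorem two_pow_card_le_of_doubling {g : ℕ → ℕ} {a b : ℕ} (hg : MonotoneOn g (Set.Icc a b))
    {S : Finset ℕ} (hS : ∀ k ∈ S, a ≤ k ∧ k < b)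
    (hdouble : ∀ k ∈ S, g (k + 1) = g k + max 1 (g k)) :
    2 ^ #S ≤ g b + max 1 (g b) := by
  induction S using Finset.induction_on_max generalizing b with
  | empty => simp only [card_empty, pow_zero]; omega
  | insert k S hlt ih =>
    obtain ⟨hak, hkb⟩ := hS k (mem_insert_self k S)
    have hprev : 2 ^ #S ≤ g k + max 1 (g k) :=
      ih (hg.mono (Set.Icc_subset_Icc le_rfl hkb.le))
        (fun j hj => ⟨(hS j (mem_insert_of_mem hj)).1, hlt j hj⟩)
        (fun j hj => hdouble j (mem_insert_of_mem hj))
    have hkg : g (k + 1) ≤ g b := hg ⟨by omega, hkb⟩ ⟨by omega, le_rfl⟩ hkb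
    have hk := hdouble k (mem_insert_self k S)
    rw [card_insert_of_notMem fun h => (hlt k h).false, pow_succ]
    generalize 2 ^ #S = p at hprev ⊢
    omega

theorem sum_log_le_card_mul_log_mean {ι : Type*} (s : Finset ι) {z : ι → ℝ}
    (hz : ∀ i ∈ s, 0 < z i) :
    ∑ i ∈ s, log (z i) ≤ #s * log ((∑ i ∈ s, z i) / #s) := by
  rcases s.eq_empty_or_nonempty with rfl | hs
  · simp
  have hcard : (0 : ℝ) < #s := by exact_mod_cast hs.card_pos
  have hjensen := strictConcaveOn_log_Ioi.concaveOn.le_map_sum (t := s)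
    (w := fun _ => (#s : ℝ)⁻¹) (p := z) (fun _ _ => by positivity) (by simp [hcard.ne']) hz
  simp only [smul_eq_mul, ← mul_sum] at hjensen
  rw [div_eq_inv_mul]
  calc ∑ i ∈ s, log (z i) = #s * ((#s : ℝ)⁻¹ * ∑ i ∈ s, log (z i)) := by field_simp
    _ ≤ _ := by gcongr

theorem natCast_le_one_add_logb_of_two_pow_le {r : ℕ} {z : ℝ} (hz : 0 < z)
    (h : (2 : ℝ) ^ r ≤ 2 * z) : (r : ℝ) ≤ 1 + logb 2 z := by
  have : (r : ℝ) ≤ logb 2 (2 * z) := by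
    rw [le_logb_iff_rpow_le one_lt_two (by positivity), rpow_natCast]
    exact h
  rwa [logb_mul two_ne_zero hz.ne', logb_self_eq_one one_lt_two] at this

theorem sum_le_two_mul_card_add_card_mul_logb {ι : Type*} {s : Finset ι} (hs : s.Nonempty)
    {r c : ι → ℕ} (hrc : ∀ i ∈ s, 2 ^ r i ≤ 2 * max 1 (c i)) (hc : #s ≤ ∑ i ∈ s, c i) :
    ((∑ i ∈ s, r i : ℕ) : ℝ) ≤ 2 * #s + #s * logb 2 ((∑ i ∈ s, c i : ℕ) / #s) := by
  push_cast
  set z : ι → ℝ := fun i => (max 1 (c i) : ℕ)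
  have hz : ∀ i ∈ s, 0 < z i := fun i _ => by positivity
  have hcard : (0 : ℝ) < #s := by exact_mod_cast hs.card_pos
  have hC : (#s : ℝ) ≤ ∑ i ∈ s, (c i : ℝ) := by exact_mod_cast hc
  have hr : ∀ i ∈ s, (r i : ℝ) ≤ 1 + logb 2 (z i) := fun i hi =>
    natCast_le_one_add_logb_of_two_pow_le (hz i hi) (by simp only [z]; exact_mod_cast hrc i hi)
  have hzsum : ∑ i ∈ s, z i ≤ 2 * ∑ i ∈ s, (c i : ℝ) :=
    calc ∑ i ∈ s, z i ≤ ∑ i ∈ s, (1 + (c i : ℝ)) :=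
          sum_le_sum fun i _ => by simp only [z]; push_cast; exact max_le (by simp) (by simp)
      _ ≤ _ := by rw [sum_add_distrib]; simp; linarith
  have hjensen : ∑ i ∈ s, logb 2 (z i) ≤ #s * logb 2 ((∑ i ∈ s, z i) / #s) := by
    simp only [logb, ← sum_div, mul_div_assoc']
    exact div_le_div_of_nonneg_right (sum_log_le_card_mul_log_mean s hz) (log_nonneg one_le_two)
  have hmean : logb 2 ((∑ i ∈ s, z i) / #s) ≤ 1 + logb 2 ((∑ i ∈ s, c i : ℝ) / #s) := by
    rw [← logb_self_eq_one one_lt_two (b := 2),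
      ← logb_mul two_ne_zero (div_pos (by linarith) hcard).ne', ← mul_div_assoc]
    exact logb_le_logb_of_le one_lt_two (div_pos (sum_pos hz hs) hcard) (by gcongr)
  calc (∑ i ∈ s, r i : ℝ) ≤ ∑ i ∈ s, (1 + logb 2 (z i)) := by exact_mod_cast sum_le_sum hr
    _ = #s + ∑ i ∈ s, logb 2 (z i) := by rw [sum_add_distrib]; simp
    _ ≤ _ := by nlinarith

theorem number_of_episodes_bound_general
    {X : Type*} [Fintype X] [DecidableEq X]
    (n : ℕ) (hn : n = Fintype.card X) (hn1 : 1 ≤ n)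
    (T m : ℕ)
    (x : ℕ → X) (t : ℕ → ℕ)
    (ht1 : t 1 = 1)
    (htmono : ∀ k, 1 ≤ k → k < m → t k < t (k + 1))
    (htm : t m ≤ T) (htm1 : t (m + 1) = T + 1)
    (N ν : ℕ → X → ℕ)
    (hN : ∀ k y, N k y = ((Finset.Ico 1 (t k)).filter (fun s => x s = y)).card)
    (hν : ∀ k y, ν k y = ((Finset.Ico (t k) (t (k + 1))).filter (fun s => x s = y)).card)
    (hTn : n ≤ T)
    (E : Finset ℕ) (K : ℕ) (hE : E.card ≤ K)
    (hdouble : ∀ k, 1 ≤ k → k ≤ m - 1 → k ∉ E → ∃ y : X, ν k y = max 1 (N k y)) :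
    (m : ℝ) ≤ 1 + 2 * n + n * Real.logb 2 ((T : ℝ) / n) + K := by
  have ht : MonotoneOn t (Set.Icc 1 (m + 1)) :=
    monotoneOn_of_le_add_one Set.ordConnected_Icc fun k _ hk hk1 => by
      rcases Nat.lt_or_eq_of_le (Nat.le_of_succ_le_succ hk1.2) with hkm | rfl
      · exact (htmono k hk.1 hkm).le
      · omega
  have hNν : ∀ k, 1 ≤ k → k ≤ m → ∀ y, N (k + 1) y = N k y + ν k y :=
    fun _ => count_succ_eq_add ht ht1 hN hν
  have hN_mono : ∀ y, MonotoneOn (N · y) (Set.Icc 1 (m + 1)) := fun y =>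
    monotoneOn_of_le_add_one Set.ordConnected_Icc fun k _ hk hk1 => by
      rw [hNν k hk.1 (Nat.le_of_succ_le_succ hk1.2) y]; omega
  have hN_total : ∑ y, N (m + 1) y = T := by
    simp only [hN, htm1]
    rw [← card_eq_sum_card_fiberwise fun s _ => mem_univ (x s)]
    simp
  have : Nonempty X := Fintype.card_pos_iff.mp (hn ▸ hn1)
  choose! trigger htrigger using hdouble
  set D := Ico 1 m \ E
  have hmD : m ≤ 1 + #D + K := by
    have : #(Ico 1 m) ≤ #D + #E := card_le_card_sdiff_add_card
    rw [Nat.card_Ico] at this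
    omega
  have hfiber : ∀ y, 2 ^ #{k ∈ D | trigger k = y} ≤ 2 * max 1 (N (m + 1) y) := fun y => by
    have := two_pow_card_le_of_doubling (hN_mono y) (S := {k ∈ D | trigger k = y})
      (fun k hk => by simp only [D, mem_filter, mem_sdiff, mem_Ico] at hk; omega)
      (fun k hk => by
        simp only [D, mem_filter, mem_sdiff, mem_Ico] at hk
        rw [hNν k hk.1.1.1 (by omega), ← hk.2, htrigger k hk.1.1.1 (by omega) hk.1.2])
    omega
  have hbound := sum_le_two_mul_card_add_card_mul_logb univ_nonempty (fun y _ => hfiber y)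
    (by rw [hN_total, card_univ, ← hn]; exact hTn)
  rw [← card_eq_sum_card_fiberwise fun k _ => mem_univ (trigger k), hN_total, card_univ,
    ← hn] at hbound
  have : (m : ℝ) ≤ 1 + #D + K := by exact_mod_cast hmD
  linarith

/-- Suppose in addition that `T ≥ n` and that there is a set `E` of at
most `K` 'special' episodes such that every non-final episode not in `E` ends because
the count of some element reached its past count, i.e., for every
`k ∈ {1, …, m−1}` with `k ∉ E` there exists `y ∈ X` with `ν_k(y) = max 1 (N_k(y))`.
Then the number of episodes satisfies `m ≤ 1 + 2n + n·log₂(T/n) + K`. -/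
theorem number_of_episodes_bound
    {X : Type*} [Fintype X] [DecidableEq X]
    (n : ℕ) (hn : n = Fintype.card X) (hn1 : 1 ≤ n)
    (T m : ℕ) (hT : 1 ≤ T) (hm : 1 ≤ m)
    (x : ℕ → X) (t : ℕ → ℕ)
    (ht1 : t 1 = 1)
    (htmono : ∀ k, 1 ≤ k → k < m → t k < t (k + 1))
    (htm : t m ≤ T) (htm1 : t (m + 1) = T + 1)
    (N ν : ℕ → X → ℕ)
    (hN : ∀ k y, N k y = ((Finset.Ico 1 (t k)).filter (fun s => x s = y)).card)
    (hν : ∀ k y, ν k y = ((Finset.Ico (t k) (t (k + 1))).filter (fun s => x s = y)).card)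
    (hstop : ∀ k y, 1 ≤ k → k ≤ m → ν k y ≤ max 1 (N k y))
    (hTn : n ≤ T)
    (E : Finset ℕ) (K : ℕ) (hE : E.card ≤ K)
    (hdouble : ∀ k, 1 ≤ k → k ≤ m - 1 → k ∉ E → ∃ y : X, ν k y = max 1 (N k y)) :
    (m : ℝ) ≤ 1 + 2 * n + n * Real.logb 2 ((T : ℝ) / n) + K :=
  number_of_episodes_bound_general n hn hn1 T m x t ht1 htmono htm htm1 N ν hN hν hTn E K hE hdouble
end
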